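/- Let a, b, c, d, e > 0 and γ₀ ∈ ℝ, and define α₁₁ = 1/a + 1/c + 1/d, α₂₂ = 1/b + 1/c + 1/e, α₁₂ = −1/c, α₁ = −1/a, α₂ = −1/e. Then α₁₁α₂₂ − α₁₂² > 0, and the function Q(x₁,x₂) = α₁₁x₁² + 2α₁₂x₁x₂ + α₂₂x₂² + 2α₁x₁ + 2α₂x₂ + γ₀ has a unique minimizer over the square [0,1]², given by x₁* = (α₁₂α₂ − α₂₂α₁)/(α₁₁α₂₂ − α₁₂²) and x₂* = (α₁₂α₁ − α₁₁α₂)/(α₁₁α₂₂ − α₁₂²); moreover (x₁*, x₂*) lies in the open square (0,1)². -/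
import Mathlib


noncomputable section
open Set

/-- The quadratic function arising in the crystalline-curvature minimization for a
theta-shaped network (Section 4.5.2 of the paper). -/
def thetaQuad (α₁₁ α₁₂ α₂₂ α₁ α₂ γ₀ x₁ x₂ : ℝ) : ℝ :=
  α₁₁ * x₁ ^ 2 + 2 * α₁₂ * x₁ * x₂ + α₂₂ * x₂ ^ 2 + 2 * α₁ * x₁ + 2 * α₂ * x₂ + γ₀

set_option maxHeartbeats 1600000 in
/-- Section 4.5.2 of the paper: the quadratic arising from the theta-shaped network with
hexagonal Wulff shape is positive definite and has a unique minimizer over `[0,1]²`,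
which is interior. -/
theorem theta_network_interior_minimizer
    (a b c d e : ℝ) (ha : 0 < a) (hb : 0 < b) (hc : 0 < c) (hd : 0 < d) (he : 0 < e)
    (γ₀ : ℝ)
    (α₁₁ α₂₂ α₁₂ α₁ α₂ : ℝ)
    (hα₁₁ : α₁₁ = 1/a + 1/c + 1/d) (hα₂₂ : α₂₂ = 1/b + 1/c + 1/e)
    (hα₁₂ : α₁₂ = -(1/c)) (hα₁ : α₁ = -(1/a)) (hα₂ : α₂ = -(1/e))
    (x₁s x₂s : ℝ)
    (hx₁s : x₁s = (α₁₂ * α₂ - α₂₂ * α₁) / (α₁₁ * α₂₂ - α₁₂ ^ 2))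
    (hx₂s : x₂s = (α₁₂ * α₁ - α₁₁ * α₂) / (α₁₁ * α₂₂ - α₁₂ ^ 2)) :
    0 < α₁₁ * α₂₂ - α₁₂ ^ 2 ∧
    x₁s ∈ Set.Ioo (0:ℝ) 1 ∧ x₂s ∈ Set.Ioo (0:ℝ) 1 ∧
    (∀ x₁ ∈ Set.Icc (0:ℝ) 1, ∀ x₂ ∈ Set.Icc (0:ℝ) 1, (x₁, x₂) ≠ (x₁s, x₂s) →
      thetaQuad α₁₁ α₁₂ α₂₂ α₁ α₂ γ₀ x₁s x₂s < thetaQuad α₁₁ α₁₂ α₂₂ α₁ α₂ γ₀ x₁ x₂) := by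
  have hA : 0 < 1/a := by positivity
  have hB : 0 < 1/b := by positivity
  have hC : 0 < 1/c := by positivity
  have hD0 : 0 < 1/d := by positivity
  have hE : 0 < 1/e := by positivity
  have hα₁₁pos : 0 < α₁₁ := by rw [hα₁₁]; positivity
  have hdet : 0 < α₁₁ * α₂₂ - α₁₂ ^ 2 := by
    rw [hα₁₁, hα₂₂, hα₁₂]
    nlinarith [mul_pos hA hB, mul_pos hA hC, mul_pos hA hE, mul_pos hC hB,
      mul_pos hC hE, mul_pos hD0 hB, mul_pos hD0 hC, mul_pos hD0 hE]
  have hdet' : α₁₁ * α₂₂ - α₁₂ ^ 2 ≠ 0 := ne_of_gt hdet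
  have hN1 : 0 < α₁₂ * α₂ - α₂₂ * α₁ := by
    rw [hα₂₂, hα₁₂, hα₁, hα₂]
    nlinarith [mul_pos hC hE, mul_pos hA hB, mul_pos hA hC, mul_pos hA hE]
  have hN2 : 0 < α₁₂ * α₁ - α₁₁ * α₂ := by
    rw [hα₁₁, hα₁₂, hα₁, hα₂]
    nlinarith [mul_pos hC hA, mul_pos hE hA, mul_pos hE hC, mul_pos hE hD0]
  have h1lt : α₁₂ * α₂ - α₂₂ * α₁ < α₁₁ * α₂₂ - α₁₂ ^ 2 := by
    rw [hα₁₁, hα₂₂, hα₁₂, hα₁, hα₂]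
    nlinarith [mul_pos hC hB, mul_pos hD0 hB, mul_pos hD0 hC, mul_pos hD0 hE]
  have h2lt : α₁₂ * α₁ - α₁₁ * α₂ < α₁₁ * α₂₂ - α₁₂ ^ 2 := by
    rw [hα₁₁, hα₂₂, hα₁₂, hα₁, hα₂]
    nlinarith [mul_pos hA hB, mul_pos hC hB, mul_pos hD0 hB, mul_pos hD0 hC]
  have hx1 : x₁s ∈ Set.Ioo (0:ℝ) 1 := by
    rw [hx₁s]
    constructor
    · exact div_pos hN1 hdet
    · exact (div_lt_one hdet).mpr h1lt
  have hx2 : x₂s ∈ Set.Ioo (0:ℝ) 1 := by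
    rw [hx₂s]
    constructor
    · exact div_pos hN2 hdet
    · exact (div_lt_one hdet).mpr h2lt
  -- gradient vanishes at the critical point
  have hx₁s' : x₁s * (α₁₁ * α₂₂ - α₁₂ ^ 2) = α₁₂ * α₂ - α₂₂ * α₁ := by
    rw [hx₁s, div_mul_cancel₀ _ hdet']
  have hx₂s' : x₂s * (α₁₁ * α₂₂ - α₁₂ ^ 2) = α₁₂ * α₁ - α₁₁ * α₂ := by
    rw [hx₂s, div_mul_cancel₀ _ hdet']
  have grad1 : α₁₁ * x₁s + α₁₂ * x₂s + α₁ = 0 := by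
    have h : (α₁₁ * x₁s + α₁₂ * x₂s + α₁) * (α₁₁ * α₂₂ - α₁₂ ^ 2) = 0 := by
      linear_combination α₁₁ * hx₁s' + α₁₂ * hx₂s'
    rcases mul_eq_zero.mp h with h' | h'
    · exact h'
    · exact absurd h' hdet'
  have grad2 : α₁₂ * x₁s + α₂₂ * x₂s + α₂ = 0 := by
    have h : (α₁₂ * x₁s + α₂₂ * x₂s + α₂) * (α₁₁ * α₂₂ - α₁₂ ^ 2) = 0 := by
      linear_combination α₁₂ * hx₁s' + α₂₂ * hx₂s'
    rcases mul_eq_zero.mp h with h' | h'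
    · exact h'
    · exact absurd h' hdet'
  refine ⟨hdet, hx1, hx2, ?_⟩
  intro x₁ _ x₂ _ hne
  have key : α₁₁ * (thetaQuad α₁₁ α₁₂ α₂₂ α₁ α₂ γ₀ x₁ x₂ -
      thetaQuad α₁₁ α₁₂ α₂₂ α₁ α₂ γ₀ x₁s x₂s) =
      (α₁₁ * (x₁ - x₁s) + α₁₂ * (x₂ - x₂s)) ^ 2 +
      (α₁₁ * α₂₂ - α₁₂ ^ 2) * (x₂ - x₂s) ^ 2 := by
    simp only [thetaQuad]
    linear_combination (2 * α₁₁ * (x₁ - x₁s)) * grad1 + (2 * α₁₁ * (x₂ - x₂s)) * grad2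
  have hpos : 0 < (α₁₁ * (x₁ - x₁s) + α₁₂ * (x₂ - x₂s)) ^ 2 +
      (α₁₁ * α₂₂ - α₁₂ ^ 2) * (x₂ - x₂s) ^ 2 := by
    by_cases hv : x₂ = x₂s
    · have hu : x₁ ≠ x₁s := fun h => hne (by rw [h, hv])
      have hu' : x₁ - x₁s ≠ 0 := sub_ne_zero.mpr hu
      have : α₁₁ * (x₁ - x₁s) + α₁₂ * (x₂ - x₂s) = α₁₁ * (x₁ - x₁s) := by
        rw [hv]; ring
      rw [this, hv]
      have h1 : 0 < (α₁₁ * (x₁ - x₁s)) ^ 2 := by positivity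
      nlinarith [h1]
    · have hv' : x₂ - x₂s ≠ 0 := sub_ne_zero.mpr hv
      have h2 : 0 < (x₂ - x₂s) ^ 2 := by positivity
      nlinarith [mul_pos hdet h2, sq_nonneg (α₁₁ * (x₁ - x₁s) + α₁₂ * (x₂ - x₂s))]
  nlinarith [key, hpos, hα₁₁pos]
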